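/- For the operators T_i on the vector space with basis {v_k : k ∈ ℤ} defined by T_i v_k = (i+k) v_{i+k} for k ≠ 0 and T_i v_0 = i(i+a) v_i (for a fixed complex parameter a), one has T_i T_j − T_j T_i = (j−i) T_{i+j} for all i, j ∈ ℤ; that is, the module A(a) is a representation of the centerless Virasoro (Witt) algebra. -/
import Mathlib


/-- The operator `T i` of the module `A(a)` over the Witt algebra, on the space with
basis `{v k : k ∈ ℤ}` (here `v k` is `Finsupp.single k 1`):
`T i v k = (i+k) v (i+k)` for `k ≠ 0`, and `T i v 0 = i(i+a) v i`. -/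
noncomputable def Aop (a : ℂ) (i : ℤ) : (ℤ →₀ ℂ) →ₗ[ℂ] (ℤ →₀ ℂ) :=
  Finsupp.lsum ℂ fun k : ℤ =>
    (if k = 0 then (i : ℂ) * (i + a) else (i : ℂ) + k) • Finsupp.lsingle (i + k)

/-- `T i T j − T j T i = (j − i) T (i+j)`: the module `A(a)` is a representation of
the centerless Virasoro (Witt) algebra. -/
theorem Aop_comm (a : ℂ) (i j : ℤ) :
    Aop a i ∘ₗ Aop a j - Aop a j ∘ₗ Aop a i = ((j : ℂ) - i) • Aop a (i + j) := by
  apply Finsupp.lhom_ext'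
  intro k
  apply LinearMap.ext_ring
  simp only [Aop, LinearMap.comp_apply, LinearMap.sub_apply, LinearMap.smul_apply,
    Finsupp.lsingle_apply, Finsupp.lsum_single, Finsupp.smul_single,
    smul_eq_mul, mul_one]
  rw [show i + (j + k) = i + j + k from by ring, show j + (i + k) = i + j + k from by ring,
    ← Finsupp.single_sub]
  refine congrArg (fun t : ℂ => Finsupp.single (i + j + k) t) ?_
  by_cases hk : k = 0
  · subst hk
    by_cases hi : i = 0 <;> by_cases hj : j = 0 <;>
      simp only [hi, hj, add_zero, zero_add, if_pos rfl, if_neg, reduceIte, ite_true,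
        ite_false] <;>
      (push_cast; ring)
  · rw [if_neg hk, if_neg hk, if_neg hk]
    rcases eq_or_ne (j + k) 0 with hjk | hjk
    · obtain rfl : j = -k := by omega
      rcases eq_or_ne (i + k) 0 with hik | hik
      · obtain rfl : i = -k := by omega
        rw [if_pos (show (-k : ℤ) + k = 0 from by ring)]; push_cast; ring
      · rw [if_pos (show (-k : ℤ) + k = 0 from by ring), if_neg hik]; push_cast; ring
    · rcases eq_or_ne (i + k) 0 with hik | hik
      · obtain rfl : i = -k := by omega
        rw [if_neg hjk, if_pos (show (-k : ℤ) + k = 0 from by ring)]; push_cast; ring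
      · rw [if_neg hjk, if_neg hik]; push_cast; ring
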